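/- Let Γ be a group and f : Γ → Sym(n) a function, n ∈ ℕ. Then there exists a symmetric function f' : Γ → Sym(n) such that d^H(f(γ), f'(γ)) ≤ 2·defect_∞(f) for every γ ∈ Γ, and defect_∞(f') ≤ 7·defect_∞(f). -/

import Mathlib

open Finset

/-- Extend a permutation of `Fin n` to a partial function `ℕ → Option ℕ`
(`none` playing the role of the dummy symbol `⋆`). -/
def permExt {n : ℕ} (σ : Equiv.Perm (Fin n)) : ℕ → Option ℕ :=
  fun x => if h : x < n then some ((σ ⟨x, h⟩ : Fin n) : ℕ) else none

/-- The (extended) normalized Hamming distance between permutations of possibly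
different sizes.  For `n = N` it is `|{x : σ x ≠ τ x}| / n`; for `n ≤ N` it is
`(|{x ∈ [n] : σ x ≠ τ x}| + (N - n)) / N`. -/
noncomputable def dH {n N : ℕ} (σ : Equiv.Perm (Fin n)) (τ : Equiv.Perm (Fin N)) : ℝ :=
  (((Finset.range (max n N)).filter fun x => permExt σ x ≠ permExt τ x).card : ℝ)
    / ((max n N : ℕ) : ℝ)

/-- The uniform local defect of a map into a symmetric group. -/
noncomputable def defectInfty {Γ : Type*} [Group Γ] {n : ℕ}
    (f : Γ → Equiv.Perm (Fin n)) : ℝ :=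
  ⨆ p : Γ × Γ, dH (f (p.1 * p.2)) (f p.1 * f p.2)

/-- The uniform distance between two maps into (possibly different) symmetric groups. -/
noncomputable def dInfty {Γ : Type*} {n N : ℕ}
    (f : Γ → Equiv.Perm (Fin n)) (h : Γ → Equiv.Perm (Fin N)) : ℝ :=
  ⨆ γ : Γ, dH (f γ) (h γ)

/-- A finitely-additive probability measure on (the power set of) `Γ`. -/
def IsFinAddProb {Γ : Type*} (m : Set Γ → ℝ) : Prop :=
  (∀ A : Set Γ, 0 ≤ m A ∧ m A ≤ 1) ∧ m Set.univ = 1 ∧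
    ∀ A B : Set Γ, Disjoint A B → m (A ∪ B) = m A + m B

/-- Left invariance of a finitely-additive measure. -/
def LeftInvariant {Γ : Type*} [Group Γ] (m : Set Γ → ℝ) : Prop :=
  ∀ (γ : Γ) (A : Set Γ), m ((fun a => γ * a) '' A) = m A

/-- Right invariance of a finitely-additive measure. -/
def RightInvariant {Γ : Type*} [Group Γ] (m : Set Γ → ℝ) : Prop :=
  ∀ (γ : Γ) (A : Set Γ), m ((fun a => a * γ) '' A) = m A

/-- Inverse invariance of a finitely-additive measure. -/
def InvInvariant {Γ : Type*} [Group Γ] (m : Set Γ → ℝ) : Prop :=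
  ∀ A : Set Γ, m A⁻¹ = m A

/-- A discrete group is amenable if it admits a left-invariant finitely-additive
probability measure. -/
def IsAmenable (Γ : Type*) [Group Γ] : Prop :=
  ∃ m : Set Γ → ℝ, IsFinAddProb m ∧ LeftInvariant m

/-- A function between groups is symmetric if it sends `1 ↦ 1` and respects inverses. -/
def IsSymmetricMap {Γ G : Type*} [Group Γ] [Group G] (f : Γ → G) : Prop :=
  f 1 = 1 ∧ ∀ γ : Γ, f γ⁻¹ = (f γ)⁻¹

/-- The weight `w(x →γ→ y)` : the measure of the set of supporters
`T(x →γ→ y) = { t : f(t)(f(t⁻¹γ)(x)) = y }`. -/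
def weight {Γ : Type*} [Group Γ] {n : ℕ} (m : Set Γ → ℝ)
    (f : Γ → Equiv.Perm (Fin n)) (x : Fin n) (γ : Γ) (y : Fin n) : ℝ :=
  m { t : Γ | f t (f (t⁻¹ * γ) x) = y }

/-!
With `ε` the defect of `f`, the normalized Hamming distance is a bi-invariant metric on `Sym(n)`,
so `f 1` is `ε`-close to `1` and `f γ⁻¹` is `2ε`-close to `(f γ)⁻¹`. Well-order `Γ`; on each pair
`γ < γ⁻¹` put `f' γ = f γ` and `f' γ⁻¹ = (f γ)⁻¹`, and put `f' 1 = 1`. For an involution `γ ≠ 1`,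
let `f' γ` agree with `f γ` at the points where `(f γ)²` is the identity and fix all other points:
it is an involution, and it differs from `f γ` only at points moved by `(f γ)²`, a permutation
`2ε`-close to `1` (through `f (γ²) = f 1`). So `f'` is `2ε`-close to `f`, and four triangle inequalities bound its defect by
`2ε + ε + 2ε + 2ε`.
-/

open Equiv

lemma hammingDist_comp_equiv {ι κ β : Type*} [Fintype ι] [Fintype κ] [DecidableEq β]
    (x y : ι → β) (e : κ ≃ ι) : hammingDist (x ∘ e) (y ∘ e) = hammingDist x y :=
  Finset.card_equiv e fun i => by simp

section HammingPerm

variable {n : ℕ}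

lemma dH_eq_hammingDist (σ τ : Perm (Fin n)) : dH σ τ = hammingDist ⇑σ ⇑τ / n := by
  rw [dH, max_self, hammingDist, card_filter, card_filter, ← Fin.sum_univ_eq_sum_range]
  simp [permExt, Fin.val_inj]

lemma dH_nonneg (σ τ : Perm (Fin n)) : 0 ≤ dH σ τ := by
  rw [dH_eq_hammingDist]; positivity

lemma dH_le_one (σ τ : Perm (Fin n)) : dH σ τ ≤ 1 := by
  rw [dH_eq_hammingDist]
  refine div_le_one_of_le₀ ?_ (Nat.cast_nonneg n)
  exact_mod_cast hammingDist_le_card_fintype.trans_eq (Fintype.card_fin n)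

lemma dH_self (σ : Perm (Fin n)) : dH σ σ = 0 := by
  simp [dH_eq_hammingDist]

lemma dH_comm (σ τ : Perm (Fin n)) : dH σ τ = dH τ σ := by
  simp only [dH_eq_hammingDist, hammingDist_comm]

lemma dH_triangle (σ τ ρ : Perm (Fin n)) : dH σ ρ ≤ dH σ τ + dH τ ρ := by
  simp only [dH_eq_hammingDist, ← add_div]
  gcongr
  exact_mod_cast hammingDist_triangle _ _ _

lemma dH_mul_left (α σ τ : Perm (Fin n)) : dH (α * σ) (α * τ) = dH σ τ := by
  simp only [dH_eq_hammingDist]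
  congr 2
  exact hammingDist_comp (fun _ => α) fun _ => α.injective

lemma dH_mul_right (σ τ α : Perm (Fin n)) : dH (σ * α) (τ * α) = dH σ τ := by
  simp only [dH_eq_hammingDist, Perm.coe_mul, hammingDist_comp_equiv]

end HammingPerm

namespace Equiv.Perm

variable {α : Type*} [DecidableEq α]

def involutivePartFun (σ : Perm α) (x : α) : α :=
  if σ (σ x) = x then σ x else x

lemma involutive_involutivePartFun (σ : Perm α) : Function.Involutive (involutivePartFun σ) := by
  intro x
  by_cases h : σ (σ x) = x <;> simp [involutivePartFun, h]

def involutivePart (σ : Perm α) : Perm α :=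
  (involutive_involutivePartFun σ).toPerm

lemma involutivePart_inv (σ : Perm α) : σ.involutivePart⁻¹ = σ.involutivePart :=
  inv_eq_of_mul_eq_one_right (ext (involutive_involutivePartFun σ))

end Equiv.Perm

lemma dH_involutivePart_le {n : ℕ} (σ : Perm (Fin n)) :
    dH σ σ.involutivePart ≤ dH (σ * σ) (1 : Perm (Fin n)) := by
  simp only [dH_eq_hammingDist]
  gcongr
  refine Finset.card_le_card (Finset.monotone_filter_right _ fun x _ hx hsq => hx ?_)
  rw [Perm.mul_apply, Perm.one_apply] at hsq
  simp [Perm.involutivePart, Perm.involutivePartFun, hsq]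

section Defect

variable {Γ : Type*} [Group Γ] {n : ℕ}

lemma dH_le_defectInfty (f : Γ → Perm (Fin n)) (γ δ : Γ) :
    dH (f (γ * δ)) (f γ * f δ) ≤ defectInfty f :=
  le_ciSup (f := fun p : Γ × Γ => dH (f (p.1 * p.2)) (f p.1 * f p.2))
    ⟨1, by rintro _ ⟨p, rfl⟩; exact dH_le_one _ _⟩ (γ, δ)

lemma defectInfty_nonneg (f : Γ → Perm (Fin n)) : 0 ≤ defectInfty f :=
  (dH_nonneg _ _).trans (dH_le_defectInfty f 1 1)

lemma dH_map_one_le_defectInfty (f : Γ → Perm (Fin n)) :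
    dH (f 1) (1 : Perm (Fin n)) ≤ defectInfty f := by
  rw [← dH_mul_left (f 1), mul_one, dH_comm]
  simpa using dH_le_defectInfty f 1 1

lemma dH_map_inv_le_defectInfty (f : Γ → Perm (Fin n)) (γ : Γ) :
    dH (f γ⁻¹) (f γ)⁻¹ ≤ 2 * defectInfty f :=
  calc dH (f γ⁻¹) (f γ)⁻¹ = dH (f γ * f γ⁻¹) 1 := by rw [← dH_mul_left (f γ), mul_inv_cancel]
    _ ≤ dH (f γ * f γ⁻¹) (f (γ * γ⁻¹)) + dH (f (γ * γ⁻¹)) 1 := dH_triangle _ _ _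
    _ ≤ defectInfty f + defectInfty f := by
        gcongr
        · rw [dH_comm]; exact dH_le_defectInfty f γ γ⁻¹
        · rw [mul_inv_cancel]; exact dH_map_one_le_defectInfty f
    _ = 2 * defectInfty f := (two_mul _).symm

lemma defectInfty_le_of_dH_le {f g : Γ → Perm (Fin n)} {c : ℝ} (h : ∀ γ, dH (f γ) (g γ) ≤ c) :
    defectInfty g ≤ defectInfty f + 3 * c := by
  refine ciSup_le fun ⟨γ, δ⟩ => ?_
  calc dH (g (γ * δ)) (g γ * g δ)
      ≤ dH (g (γ * δ)) (f (γ * δ)) + dH (f (γ * δ)) (f γ * f δ)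
          + dH (f γ * f δ) (f γ * g δ) + dH (f γ * g δ) (g γ * g δ) := by
        linarith [dH_triangle (g (γ * δ)) (f (γ * δ)) (f γ * g δ),
          dH_triangle (f (γ * δ)) (f γ * f δ) (f γ * g δ),
          dH_triangle (g (γ * δ)) (f γ * g δ) (g γ * g δ)]
    _ ≤ c + defectInfty f + c + c := by
        gcongr
        · rw [dH_comm]; exact h _
        · exact dH_le_defectInfty f γ δ
        · rw [dH_mul_left]; exact h δ
        · rw [dH_mul_right]; exact h γ
    _ = defectInfty f + 3 * c := by ring

lemma exists_symmetric_approx (f : Γ → Perm (Fin n)) (γ : Γ) :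
    ∃ s : Perm (Fin n), dH (f γ) s ≤ 2 * defectInfty f ∧ dH (f γ⁻¹) s⁻¹ ≤ 2 * defectInfty f ∧
      (γ = 1 → s = 1) ∧ (γ⁻¹ = γ → s⁻¹ = s) := by
  have hε := defectInfty_nonneg f
  by_cases h1 : γ = 1
  · subst h1
    have := dH_map_one_le_defectInfty f
    exact ⟨1, by linarith, by simp only [inv_one]; linarith, fun _ => rfl, fun _ => inv_one⟩
  by_cases hinv : γ⁻¹ = γ
  · have hs : dH (f γ) (f γ).involutivePart ≤ 2 * defectInfty f :=
      calc dH (f γ) (f γ).involutivePart ≤ dH (f γ * f γ) 1 := dH_involutivePart_le _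
        _ = dH (f γ⁻¹) (f γ)⁻¹ := by
          rw [← dH_mul_left (f γ)⁻¹, inv_mul_cancel_left, mul_one, hinv]
        _ ≤ 2 * defectInfty f := dH_map_inv_le_defectInfty f γ
    refine ⟨(f γ).involutivePart, hs, ?_, fun h => absurd h h1, fun _ => Perm.involutivePart_inv _⟩
    rwa [hinv, Perm.involutivePart_inv]
  · exact ⟨f γ, by rw [dH_self]; linarith, dH_map_inv_le_defectInfty f γ,
      fun h => absurd h h1, fun h => absurd h hinv⟩

end Defect

theorem exists_isSymmetricMap_of_forall_exists {Γ G : Type*} [Group Γ] [Group G]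
    (R : Γ → G → Prop)
    (h : ∀ γ, ∃ s, R γ s ∧ R γ⁻¹ s⁻¹ ∧ (γ = 1 → s = 1) ∧ (γ⁻¹ = γ → s⁻¹ = s)) :
    ∃ g : Γ → G, IsSymmetricMap g ∧ ∀ γ, R γ (g γ) := by
  classical
  choose s hR hRinv hone hinvol using h
  let : LinearOrder Γ := linearOrderOfSTO WellOrderingRel
  refine ⟨fun γ => if γ ≤ γ⁻¹ then s γ else (s γ⁻¹)⁻¹, ⟨?_, fun γ => ?_⟩, fun γ => ?_⟩
  · simp [hone]
  · rcases lt_trichotomy γ γ⁻¹ with hlt | heq | hgt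
    · simp [hlt.le, hlt.not_ge]
    · simp only [← heq, le_refl, if_true]
      exact (hinvol γ heq.symm).symm
    · simp [hgt.le, hgt.not_ge]
  · dsimp only
    split_ifs
    · exact hR γ
    · simpa using hRinv γ⁻¹

/-- symmetrization for maps into symmetric groups. -/
theorem statement7 {Γ : Type*} [Group Γ] (n : ℕ) (f : Γ → Equiv.Perm (Fin n)) :
    ∃ f' : Γ → Equiv.Perm (Fin n), IsSymmetricMap f' ∧
      (∀ γ : Γ, dH (f γ) (f' γ) ≤ 2 * defectInfty f) ∧
      defectInfty f' ≤ 7 * defectInfty f := by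
  obtain ⟨g, hg, hfg⟩ := exists_isSymmetricMap_of_forall_exists _ (exists_symmetric_approx f)
  refine ⟨g, hg, hfg, ?_⟩
  linarith [defectInfty_le_of_dH_le hfg]
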